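/- Let $g \in L^2([-1,1]^d)$ with Haar tensor decomposition $g = \sum_S f_S$ indexed by subsets $S \subseteq \{1,\dots,d\}$ (where $f_S$ collects the Haar terms $\Psi_{\mathbf{j},\mathbf{k}}$ with $\mathrm{supp}(\mathbf{j}) = S$), and set $g_2 = \sum_{|S|=2} f_S$. For each $l$, let $\lambda_l$ denote orthogonal projection onto the subspace $\mathsf{SAff}_l$ of functions affine on every hyperplane $\{x_l = c\}$. If $d \ge 3$, then $(d-2)\|g_2\|_2^2 \le \sum_{l=1}^d \|g_2 - \lambda_l(g_2)\|_2^2 \le d\,\|g_2\|_2^2$. -/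

import Mathlib

/-!
Haar tensors with different supports are orthogonal, so `‖g₂‖² = ∑_{|S|=2} ‖f_S‖²`. A Haar
tensor with two non-constant factors in coordinates other than `l` is orthogonal to every
function that is affine on the slices `{x_l = t}`: integrating over `x_l` last, on each slice
it is a product with two mean-zero factors integrated against an affine function. Hence
`h_l = ∑_{|S|=2, l ∉ S} f_S` is orthogonal to `g₂ - h_l - λ_l(g₂)`, so
`‖h_l‖² ≤ ‖g₂ - λ_l(g₂)‖²`, and summing over `l` counts every `S` exactly `d - 2` times.
The upper bound compares `λ_l(g₂)` with the slice-affine function `0`.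
-/

open scoped BigOperators ENNReal
open MeasureTheory Classical
noncomputable section

def haar (j k : ℕ) (t : ℝ) : ℝ :=
  if j = 0 then 1
  else
    if (2 * k) * 2 ^ (1 - (j : ℤ)) - 1 ≤ t ∧ t < (2 * k + 1) * 2 ^ (1 - (j : ℤ)) - 1 then -1
    else if (2 * k + 1) * 2 ^ (1 - (j : ℤ)) - 1 ≤ t ∧ t < (2 * k + 2) * 2 ^ (1 - (j : ℤ)) - 1 then 1
    else 0

def Box (d : ℕ) : Set (Fin d → ℝ) := Set.univ.pi fun _ => Set.Icc (-1 : ℝ) 1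

def boxMeasure (d : ℕ) : Measure (Fin d → ℝ) := volume.restrict (Box d)

def haarTensor {d : ℕ} (j k : Fin d → ℕ) : (Fin d → ℝ) → ℝ :=
  fun x => ∏ i, haar (j i) (k i) (x i)

def ValidIdx {d : ℕ} (j k : Fin d → ℕ) : Prop :=
  ∀ i, (j i = 0 → k i = 0) ∧ (j i ≠ 0 → k i < 2 ^ (j i - 1))

/-- The closed span, in `L²([-1,1]^d)`, of the Haar functions `Ψ_{𝐣,𝐤}` whose
multi-index `𝐣` has support exactly the set `S`. -/
def HaarSpanS (d : ℕ) (S : Finset (Fin d)) : Submodule ℝ (Lp ℝ 2 (boxMeasure d)) :=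
  (Submodule.span ℝ {h : Lp ℝ 2 (boxMeasure d) | ∃ j k : Fin d → ℕ, ValidIdx j k ∧
    (Finset.univ.filter fun m => j m ≠ 0) = S ∧
    ⇑h =ᵐ[boxMeasure d] haarTensor j k}).topologicalClosure

def IsSliceAffine {d : ℕ} (i : Fin d) (f : (Fin d → ℝ) → ℝ) : Prop :=
  ∃ (a : ℝ → Fin d → ℝ) (b : ℝ → ℝ), ∀ x, f x = ∑ j, a (x i) j * x j + b (x i)

/-- The functions that are affine on every hyperplane slice `{x_l = c}`,
viewed inside `L²([-1,1]^d)`. -/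
def SAffL (d : ℕ) (l : Fin d) : Set (Lp ℝ 2 (boxMeasure d)) :=
  {h | ∃ f, IsSliceAffine l f ∧ ⇑h =ᵐ[boxMeasure d] f}

open scoped RealInnerProductSpace
open Finset Set

lemma measurable_haar (j k : ℕ) : Measurable (haar j k) := by
  unfold haar
  split_ifs
  · exact measurable_const
  · refine .ite ?_ measurable_const (.ite ?_ measurable_const measurable_const) <;>
      exact (measurableSet_le measurable_const measurable_id).inter
        (measurableSet_lt measurable_id measurable_const)

lemma abs_haar_le_one (j k : ℕ) (t : ℝ) : |haar j k t| ≤ 1 := by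
  unfold haar
  split_ifs <;> norm_num

lemma haar_zero (k : ℕ) (t : ℝ) : haar 0 k t = 1 := if_pos rfl

lemma haar_of_ne_zero {j : ℕ} (hj : j ≠ 0) (k : ℕ) :
    haar j k =
      (Ico ((2 * (k : ℝ) + 1) * 2 ^ (1 - (j : ℤ)) - 1)
          ((2 * k + 2) * 2 ^ (1 - (j : ℤ)) - 1)).indicator 1 -
        (Ico (2 * (k : ℝ) * 2 ^ (1 - (j : ℤ)) - 1)
          ((2 * k + 1) * 2 ^ (1 - (j : ℤ)) - 1)).indicator 1 := by
  have : (0 : ℝ) < 2 ^ (1 - (j : ℤ)) := by positivity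
  ext t
  simp only [haar, if_neg hj, Pi.sub_apply, indicator_apply, Set.mem_Ico, Pi.one_apply]
  split_ifs <;> grind

lemma setIntegral_Icc_indicator_Ico_one {a b : ℝ} (ha : -1 ≤ a) (hab : a ≤ b) (hb : b ≤ 1) :
    ∫ t in Icc (-1 : ℝ) 1, (Ico a b).indicator 1 t = b - a := by
  rw [integral_indicator_one measurableSet_Ico, measureReal_restrict_apply measurableSet_Ico,
    inter_eq_left.mpr (Ico_subset_Icc_self.trans (Icc_subset_Icc ha hb)),
    Real.volume_real_Ico_of_le hab]

lemma integral_haar_eq_zero {j k : ℕ} (hj : j ≠ 0) (hk : k < 2 ^ (j - 1)) :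
    ∫ t in Icc (-1 : ℝ) 1, haar j k t = 0 := by
  have hint : ∀ a b : ℝ, IntegrableOn ((Ico a b).indicator (1 : ℝ → ℝ)) (Icc (-1) 1) :=
    fun a b => (integrableOn_const (by simp)).indicator measurableSet_Ico
  rw [haar_of_ne_zero hj, integral_sub' (hint _ _) (hint _ _)]
  set e : ℝ := 2 ^ (1 - (j : ℤ))
  have he : 0 < e := by positivity
  have hke : ((k : ℝ) + 1) * e ≤ 1 := by
    have hk' : (k : ℝ) + 1 ≤ 2 ^ (j - 1) := by exact_mod_cast hk
    have hinv : (2 : ℝ) ^ (j - 1) * e = 1 := by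
      rw [← zpow_natCast, ← zpow_add₀ two_ne_zero, Nat.cast_sub (Nat.one_le_iff_ne_zero.mpr hj)]
      norm_num
    nlinarith
  rw [setIntegral_Icc_indicator_Ico_one (by nlinarith) (by nlinarith) (by nlinarith),
    setIntegral_Icc_indicator_Ico_one (by nlinarith [mul_nonneg k.cast_nonneg he.le])
      (by nlinarith) (by nlinarith)]
  ring

lemma setIntegral_univ_pi_prod {ι : Type*} [Fintype ι] (s : ι → Set ℝ) (g : ι → ℝ → ℝ) :
    ∫ x in univ.pi s, ∏ i, g i (x i) = ∏ i, ∫ t in s i, g i t := by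
  rw [volume_pi, Measure.restrict_pi_pi, integral_fintype_prod_eq_prod]

lemma measurableSet_box (d : ℕ) : MeasurableSet (Box d) :=
  MeasurableSet.univ_pi fun _ => measurableSet_Icc

instance (d : ℕ) : IsFiniteMeasure (boxMeasure d) :=
  isFiniteMeasure_restrict.mpr (isCompact_univ_pi fun _ => isCompact_Icc).measure_lt_top.ne

lemma measurable_haarTensor {d : ℕ} (j k : Fin d → ℕ) : Measurable (haarTensor j k) :=
  Finset.measurable_prod _ fun i _ => (measurable_haar _ _).comp (measurable_pi_apply i)

lemma abs_haarTensor_le_one {d : ℕ} (j k : Fin d → ℕ) (x : Fin d → ℝ) :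
    |haarTensor j k x| ≤ 1 := by
  rw [haarTensor, Finset.abs_prod]
  exact prod_le_one (fun i _ => abs_nonneg _) fun i _ => abs_haar_le_one _ _ _

lemma ValidIdx.comp {m n : ℕ} {j k : Fin n → ℕ} (hv : ValidIdx j k) (e : Fin m → Fin n) :
    ValidIdx (j ∘ e) (k ∘ e) :=
  fun i => hv (e i)

/-- Fubini splits the integral into one-dimensional factors, and the factor at `i` is the
integral of `haar (j i) (k i)`. -/
lemma integral_haarTensor_mul_prod_eq_zero {n : ℕ} {j k : Fin n → ℕ} (hv : ValidIdx j k)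
    (w : Fin n → ℝ → ℝ) {i : Fin n} (hi : j i ≠ 0) (hw : ∀ t, w i t = 1) :
    ∫ x, haarTensor j k x * ∏ m, w m (x m) ∂boxMeasure n = 0 := by
  simp_rw [haarTensor, ← prod_mul_distrib]
  rw [boxMeasure, Box, setIntegral_univ_pi_prod _ fun m t => haar (j m) (k m) t * w m t]
  refine prod_eq_zero (mem_univ i) ?_
  simp only [hw, mul_one]
  exact integral_haar_eq_zero hi ((hv i).2 hi)

lemma integral_haarTensor_mul_haarTensor_eq_zero {n : ℕ} {j k j' k' : Fin n → ℕ}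
    (hv : ValidIdx j k) (hv' : ValidIdx j' k')
    (hne : univ.filter (fun m => j m ≠ 0) ≠ univ.filter (fun m => j' m ≠ 0)) :
    ∫ x, haarTensor j k x * haarTensor j' k' x ∂boxMeasure n = 0 := by
  obtain ⟨i, hi⟩ : ∃ i, ¬(j i ≠ 0 ↔ j' i ≠ 0) := by
    by_contra! h
    exact hne (filter_congr fun i _ => h i)
  by_cases hji : j i = 0
  · simp_rw [mul_comm (haarTensor j k _)]
    exact integral_haarTensor_mul_prod_eq_zero hv' _ (i := i) (by tauto) fun t => by
      rw [hji, haar_zero]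
  · exact integral_haarTensor_mul_prod_eq_zero hv _ hji fun t => by
      rw [show j' i = 0 by tauto, haar_zero]

lemma integrable_haarTensor_mul_apply {n : ℕ} (j k : Fin n → ℕ) (i : Fin n) :
    Integrable (fun x => haarTensor j k x * x i) (boxMeasure n) := by
  refine .of_bound ((measurable_haarTensor j k).mul (measurable_pi_apply i)).aestronglyMeasurable 1
    (ae_restrict_of_forall_mem (measurableSet_box n) fun x hx => ?_)
  rw [Real.norm_eq_abs, abs_mul]
  exact mul_le_one₀ (abs_haarTensor_le_one j k x) (abs_nonneg _) (abs_le.mpr (hx i trivial))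

lemma integrable_haarTensor {n : ℕ} (j k : Fin n → ℕ) :
    Integrable (haarTensor j k) (boxMeasure n) :=
  .of_bound (measurable_haarTensor j k).aestronglyMeasurable 1
    (.of_forall fun x => (abs_haarTensor_le_one j k x))

lemma integral_haarTensor_mul_affine_eq_zero {n : ℕ} {j k : Fin n → ℕ} (hv : ValidIdx j k)
    {i₁ i₂ : Fin n} (h₁₂ : i₁ ≠ i₂) (hj₁ : j i₁ ≠ 0) (hj₂ : j i₂ ≠ 0) (a : Fin n → ℝ) (c : ℝ) :
    ∫ x, haarTensor j k x * (∑ i, a i * x i + c) ∂boxMeasure n = 0 := by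
  have hcoord : ∀ m, ∫ x, haarTensor j k x * x m ∂boxMeasure n = 0 := by
    intro m
    obtain ⟨i, hi, him⟩ : ∃ i, j i ≠ 0 ∧ i ≠ m := by
      by_cases h : i₁ = m
      · exact ⟨i₂, hj₂, h ▸ h₁₂.symm⟩
      · exact ⟨i₁, hj₁, h⟩
    simpa [prod_ite_eq'] using
      integral_haarTensor_mul_prod_eq_zero hv (fun m' t => if m' = m then t else 1) hi
        fun _ => if_neg him
  have hconst : ∫ x, haarTensor j k x ∂boxMeasure n = 0 := by
    simpa using integral_haarTensor_mul_prod_eq_zero hv (fun _ _ => 1) hj₁ fun _ => rfl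
  have hsplit : ∀ x : Fin n → ℝ, haarTensor j k x * (∑ i, a i * x i + c)
      = ∑ i, a i * (haarTensor j k x * x i) + c * haarTensor j k x := by
    intro x
    rw [mul_add, mul_sum, mul_comm _ c]
    simp_rw [mul_left_comm]
  have hint : ∀ i, Integrable (fun x => a i * (haarTensor j k x * x i)) (boxMeasure n) :=
    fun i => (integrable_haarTensor_mul_apply j k i).const_mul _
  simp_rw [hsplit]
  rw [integral_add (integrable_finsetSum _ fun i _ => hint i)
      ((integrable_haarTensor j k).const_mul c), integral_finsetSum _ fun i _ => hint i]
  simp [integral_const_mul, hcoord, hconst]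

lemma integral_eq_zero_of_integral_insertNth_eq_zero {n : ℕ} {α E : Type*} [MeasureSpace α]
    [SigmaFinite (volume : Measure α)] [NormedAddCommGroup E] [NormedSpace ℝ E] (l : Fin (n + 1))
    {F : (Fin (n + 1) → α) → E} (hF : Integrable F)
    (h : ∀ t, ∫ z, F (l.insertNth t z) = 0) : ∫ x, F x = 0 := by
  let e := MeasurableEquiv.piFinSuccAbove (fun _ : Fin (n + 1) => α) l
  have he : MeasurePreserving e.symm (volume.prod volume) volume :=
    (volume_preserving_piFinSuccAbove (fun _ : Fin (n + 1) => α) l).symm e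
  have hFe : Integrable (fun p => F (e.symm p)) (volume.prod volume) :=
    (he.integrable_comp_emb e.symm.measurableEmbedding).mpr hF
  rw [← he.integral_comp', integral_prod _ hFe]
  exact integral_eq_zero_of_ae (.of_forall h)

lemma insertNth_mem_box_iff {n : ℕ} (l : Fin (n + 1)) (t : ℝ) (z : Fin n → ℝ) :
    l.insertNth t z ∈ Box (n + 1) ↔ t ∈ Icc (-1 : ℝ) 1 ∧ z ∈ Box n := by
  simp only [Box, mem_univ_pi, Fin.forall_iff_succAbove l, Fin.insertNth_apply_same,
    Fin.insertNth_apply_succAbove]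

lemma haarTensor_insertNth {n : ℕ} (j k : Fin (n + 1) → ℕ) (l : Fin (n + 1)) (t : ℝ)
    (z : Fin n → ℝ) :
    haarTensor j k (l.insertNth t z)
      = haar (j l) (k l) t * haarTensor (j ∘ l.succAbove) (k ∘ l.succAbove) z := by
  simp [haarTensor, Fin.prod_univ_succAbove _ l]

lemma IsSliceAffine.exists_affine_insertNth {n : ℕ} {l : Fin (n + 1)} {f : (Fin (n + 1) → ℝ) → ℝ}
    (hf : IsSliceAffine l f) (t : ℝ) :
    ∃ (a : Fin n → ℝ) (c : ℝ), ∀ z, f (l.insertNth t z) = ∑ i, a i * z i + c := by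
  obtain ⟨a, b, hab⟩ := hf
  refine ⟨fun i => a t (l.succAbove i), a t l * t + b t, fun z => ?_⟩
  simp [hab, Fin.sum_univ_succAbove _ l]
  ring

lemma integral_haarTensor_mul_eq_zero_of_isSliceAffine {n : ℕ} {l : Fin (n + 1)}
    {j k : Fin (n + 1) → ℕ} (hv : ValidIdx j k) {i₁ i₂ : Fin (n + 1)} (h₁₂ : i₁ ≠ i₂)
    (h₁ : i₁ ≠ l) (h₂ : i₂ ≠ l) (hj₁ : j i₁ ≠ 0) (hj₂ : j i₂ ≠ 0) {f : (Fin (n + 1) → ℝ) → ℝ}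
    (hf : IsSliceAffine l f) (hfi : Integrable f (boxMeasure (n + 1))) :
    ∫ x, haarTensor j k x * f x ∂boxMeasure (n + 1) = 0 := by
  obtain ⟨i₁, rfl⟩ := Fin.exists_succAbove_eq h₁
  obtain ⟨i₂, rfl⟩ := Fin.exists_succAbove_eq h₂
  have hint : Integrable (fun x => haarTensor j k x * f x) (boxMeasure (n + 1)) :=
    hfi.bdd_mul (measurable_haarTensor j k).aestronglyMeasurable
      (.of_forall fun x => abs_haarTensor_le_one j k x)
  rw [boxMeasure, ← integral_indicator (measurableSet_box _)]
  refine integral_eq_zero_of_integral_insertNth_eq_zero l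
    ((integrable_indicator_iff (measurableSet_box _)).mpr hint) fun t => ?_
  obtain ⟨a, c, hac⟩ := hf.exists_affine_insertNth t
  have hslice : ∀ z, (Box (n + 1)).indicator (fun x => haarTensor j k x * f x) (l.insertNth t z)
      = (Set.Icc (-1) 1).indicator (haar (j l) (k l)) t * (Box n).indicator
          (fun z => haarTensor (j ∘ l.succAbove) (k ∘ l.succAbove) z * (∑ i, a i * z i + c)) z := by
    intro z
    simp only [indicator_apply, insertNth_mem_box_iff, haarTensor_insertNth, hac]
    split_ifs <;> simp_all [mul_assoc]
  simp_rw [hslice]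
  rw [integral_const_mul, integral_indicator (measurableSet_box n), ← boxMeasure,
    integral_haarTensor_mul_affine_eq_zero (hv.comp _) (i₁ := i₁) (i₂ := i₂)
      (ne_of_apply_ne l.succAbove h₁₂) hj₁ hj₂, mul_zero]

lemma inner_eq_integral_of_ae_eq {α : Type*} [MeasurableSpace α] {μ : Measure α}
    {u v : Lp ℝ 2 μ} {f g : α → ℝ} (hu : ⇑u =ᵐ[μ] f) (hv : ⇑v =ᵐ[μ] g) :
    ⟪u, v⟫ = ∫ x, f x * g x ∂μ := by
  rw [L2.inner_def]
  refine integral_congr_ae ?_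
  filter_upwards [hu, hv] with x hux hvx
  rw [Real.inner_apply, hux, hvx]

lemma haarSpanS_le_orthogonal {d : ℕ} {S : Finset (Fin d)}
    {K : Submodule ℝ (Lp ℝ 2 (boxMeasure d))}
    (h : ∀ (u : Lp ℝ 2 (boxMeasure d)) (j k : Fin d → ℕ), ValidIdx j k →
      univ.filter (fun m => j m ≠ 0) = S → ⇑u =ᵐ[boxMeasure d] haarTensor j k → u ∈ Kᗮ) :
    HaarSpanS d S ≤ Kᗮ :=
  Submodule.topologicalClosure_minimal _
    (Submodule.span_le.mpr fun u ⟨j, k, hv, hS, hu⟩ => h u j k hv hS hu)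
    (Submodule.isClosed_orthogonal K)

lemma haarSpanS_isOrtho {d : ℕ} {S T : Finset (Fin d)} (hST : S ≠ T) :
    HaarSpanS d S ⟂ HaarSpanS d T := by
  rw [Submodule.isOrtho_iff_le]
  refine haarSpanS_le_orthogonal fun u j k hv hS hu =>
    (Submodule.mem_orthogonal' _ _).mpr fun v hvT => ?_
  refine Submodule.mem_orthogonal_singleton_iff_inner_right.mp
    (haarSpanS_le_orthogonal (fun v j' k' hv' hT hvj => ?_) hvT)
  rw [Submodule.mem_orthogonal_singleton_iff_inner_right, inner_eq_integral_of_ae_eq hu hvj]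
  exact integral_haarTensor_mul_haarTensor_eq_zero hv hv' (hS ▸ hT ▸ hST)

lemma orthogonalFamily_haarSpanS (d : ℕ) :
    OrthogonalFamily ℝ (fun S => HaarSpanS d S) fun S => (HaarSpanS d S).subtypeₗᵢ :=
  orthogonalFamily_iff_pairwise.mpr fun _ _ hST => haarSpanS_isOrtho hST

lemma haarSpanS_le_orthogonal_of_mem_sAffL {d : ℕ} {S : Finset (Fin d)} {l : Fin d}
    (hS : 1 < (S.erase l).card) {w : Lp ℝ 2 (boxMeasure d)} (hw : w ∈ SAffL d l) :
    HaarSpanS d S ≤ (ℝ ∙ w)ᗮ := by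
  obtain ⟨f, hf, hwf⟩ := hw
  obtain ⟨i₁, hi₁, i₂, hi₂, h₁₂⟩ := Finset.one_lt_card.mp hS
  refine haarSpanS_le_orthogonal fun u j k hv hjS hu => ?_
  have hsupp : ∀ i ∈ S.erase l, j i ≠ 0 := fun i hi => by
    simpa [← hjS] using mem_of_mem_erase hi
  rw [Submodule.mem_orthogonal_singleton_iff_inner_right, inner_eq_integral_of_ae_eq hwf hu]
  simp_rw [mul_comm (f _)]
  obtain ⟨n, rfl⟩ : ∃ n, d = n + 1 := ⟨d - 1, by have := l.pos; omega⟩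
  exact integral_haarTensor_mul_eq_zero_of_isSliceAffine hv h₁₂ (ne_of_mem_erase hi₁)
    (ne_of_mem_erase hi₂) (hsupp i₁ hi₁) (hsupp i₂ hi₂) hf
    (((Lp.memLp w).integrable one_le_two).congr hwf)

lemma zero_mem_sAffL {d : ℕ} (l : Fin d) : (0 : Lp ℝ 2 (boxMeasure d)) ∈ SAffL d l :=
  ⟨0, ⟨0, 0, fun x => by simp⟩, Lp.coeFn_zero _ _ _⟩

lemma sum_norm_sq_filter_notMem_le {d : ℕ} {fS : Finset (Fin d) → Lp ℝ 2 (boxMeasure d)}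
    (hfS : ∀ S, fS S ∈ HaarSpanS d S) {P : Finset (Finset (Fin d))} (hP : ∀ S ∈ P, S.card = 2)
    {l : Fin d} {w : Lp ℝ 2 (boxMeasure d)} (hw : w ∈ SAffL d l) :
    ∑ S ∈ P with l ∉ S, ‖fS S‖ ^ 2 ≤ ‖∑ S ∈ P, fS S - w‖ ^ 2 := by
  set h := ∑ S ∈ P with l ∉ S, fS S
  set k := ∑ S ∈ P with l ∈ S, fS S
  have hhk : ⟪h, k⟫ = 0 := by
    simp only [h, k, sum_inner, inner_sum]
    refine sum_eq_zero fun T hT => sum_eq_zero fun S hS =>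
      (haarSpanS_isOrtho (S := S) (T := T) ?_).inner_eq (hfS S) (hfS T)
    rintro rfl
    exact (mem_filter.mp hS).2 (mem_filter.mp hT).2
  have hhw : ⟪h, w⟫ = 0 := by
    simp only [h, sum_inner]
    refine sum_eq_zero fun S hS => Submodule.mem_orthogonal_singleton_iff_inner_left.mp ?_
    obtain ⟨hSP, hlS⟩ := mem_filter.mp hS
    refine haarSpanS_le_orthogonal_of_mem_sAffL ?_ hw (hfS S)
    rw [erase_eq_of_notMem hlS, hP S hSP]
    norm_num
  have hh : ‖h‖ ^ 2 = ∑ S ∈ P with l ∉ S, ‖fS S‖ ^ 2 :=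
    (orthogonalFamily_haarSpanS d).norm_sum (fun S => ⟨fS S, hfS S⟩) _
  have hsplit : ∑ S ∈ P, fS S - w = h + (k - w) := by
    rw [← sum_filter_add_sum_filter_not P (l ∈ ·)]
    abel
  calc ∑ S ∈ P with l ∉ S, ‖fS S‖ ^ 2 ≤ ‖h‖ ^ 2 + ‖k - w‖ ^ 2 := by
        rw [hh]
        exact le_add_of_nonneg_right (sq_nonneg _)
    _ = ‖∑ S ∈ P, fS S - w‖ ^ 2 := by
        rw [hsplit, sq, sq, sq, norm_add_sq_eq_norm_sq_add_norm_sq_real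
          (by rw [inner_sub_right, hhk, hhw, sub_zero])]

lemma sum_sum_filter_notMem {ι M : Type*} [Fintype ι] [DecidableEq ι] [AddCommMonoid M]
    (P : Finset (Finset ι)) (x : Finset ι → M) :
    ∑ l, ∑ S ∈ P with l ∉ S, x S = ∑ S ∈ P, (Fintype.card ι - S.card) • x S := by
  simp_rw [sum_filter]
  rw [sum_comm]
  refine sum_congr rfl fun S _ => ?_
  rw [← sum_filter, sum_const, ← card_compl]
  congr 2
  ext
  simp

theorem slice_affine_projection_g2_bounds_general (d : ℕ)
    (fS : Finset (Fin d) → Lp ℝ 2 (boxMeasure d))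
    (hfS : ∀ S, fS S ∈ HaarSpanS d S)
    (g2 : Lp ℝ 2 (boxMeasure d))
    (hg2 : g2 = ∑ S ∈ Finset.univ.filter (fun S : Finset (Fin d) => S.card = 2), fS S)
    (ll : Fin d → Lp ℝ 2 (boxMeasure d))
    (hll : ∀ l, ll l ∈ SAffL d l)
    (hllmin : ∀ l, ∀ h ∈ SAffL d l, ‖g2 - ll l‖ ≤ ‖g2 - h‖) :
    ((d : ℝ) - 2) * ‖g2‖ ^ 2 ≤ ∑ l : Fin d, ‖g2 - ll l‖ ^ 2 ∧
    ∑ l : Fin d, ‖g2 - ll l‖ ^ 2 ≤ (d : ℝ) * ‖g2‖ ^ 2 := by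
  set P := univ.filter fun S : Finset (Fin d) => S.card = 2
  have hP : ∀ S ∈ P, S.card = 2 := fun S hS => (mem_filter.mp hS).2
  have hnorm : ‖g2‖ ^ 2 = ∑ S ∈ P, ‖fS S‖ ^ 2 :=
    hg2 ▸ (orthogonalFamily_haarSpanS d).norm_sum (fun S => ⟨fS S, hfS S⟩) P
  constructor
  · calc ((d : ℝ) - 2) * ‖g2‖ ^ 2 = ∑ l, ∑ S ∈ P with l ∉ S, ‖fS S‖ ^ 2 := by
          rw [sum_sum_filter_notMem, hnorm, mul_sum]
          refine sum_congr rfl fun S hS => ?_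
          have h2d : 2 ≤ d := hP S hS ▸ (card_le_univ S).trans_eq (Fintype.card_fin d)
          rw [nsmul_eq_mul, Fintype.card_fin, hP S hS, Nat.cast_sub h2d, Nat.cast_two]
      _ ≤ ∑ l, ‖g2 - ll l‖ ^ 2 :=
          sum_le_sum fun l _ => hg2 ▸ sum_norm_sq_filter_notMem_le hfS hP (hll l)
  · calc ∑ l, ‖g2 - ll l‖ ^ 2 ≤ ∑ _l : Fin d, ‖g2‖ ^ 2 :=
          sum_le_sum fun l _ => pow_le_pow_left₀ (norm_nonneg _)
            (by simpa using hllmin l 0 (zero_mem_sAffL l)) 2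
      _ = d * ‖g2‖ ^ 2 := by simp

/-- Let `g = ∑_S f_S` be the Haar tensor decomposition of
`g ∈ L²([-1,1]^d)` and `g₂ = ∑_{|S|=2} f_S`.  If `λ_l(g₂)` denotes the best slice-affine
approximation of `g₂` in direction `l`, then for `d ≥ 3`,
`(d-2)‖g₂‖² ≤ ∑_l ‖g₂ - λ_l(g₂)‖² ≤ d‖g₂‖²`. -/
theorem slice_affine_projection_g2_bounds (d : ℕ) (hd : 3 ≤ d)
    (g : Lp ℝ 2 (boxMeasure d)) (fS : Finset (Fin d) → Lp ℝ 2 (boxMeasure d))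
    (hfS : ∀ S, fS S ∈ HaarSpanS d S)
    (hsum : g = ∑ S : Finset (Fin d), fS S)
    (g2 : Lp ℝ 2 (boxMeasure d))
    (hg2 : g2 = ∑ S ∈ Finset.univ.filter (fun S : Finset (Fin d) => S.card = 2), fS S)
    (ll : Fin d → Lp ℝ 2 (boxMeasure d))
    (hll : ∀ l, ll l ∈ SAffL d l)
    (hllmin : ∀ l, ∀ h ∈ SAffL d l, ‖g2 - ll l‖ ≤ ‖g2 - h‖) :
    ((d : ℝ) - 2) * ‖g2‖ ^ 2 ≤ ∑ l : Fin d, ‖g2 - ll l‖ ^ 2 ∧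
    ∑ l : Fin d, ‖g2 - ll l‖ ^ 2 ≤ (d : ℝ) * ‖g2‖ ^ 2 :=
  slice_affine_projection_g2_bounds_general d fS hfS g2 hg2 ll hll hllmin
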